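/- arXiv:2101.09438 — 6 statements merged into one kernel-verified Lean document; each statement's English description precedes it below -/
import Mathlib

section
/- Any interval [q,s] of natural numbers can be partitioned into two finite sequences of disjoint consecutive intervals (I_{−k},…,I_0) and (I_1,…,I_p), all belonging to the geometric cover and contained in [q,s], such that |I_{−i}|/|I_{−i+1}| ≤ 1/2 for all i ≥ 1 and |I_i|/|I_{i−1}| ≤ 1/2 for all i ≥ 2. -/
/-!
Cover `[q, s]` greedily from the left: at the current left endpoint `x` take the largest block
`[x, x + 2^k - 1]` of the geometric cover that still ends by `s`, i.e. the largest `k` with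
`2^k ∣ x` and `x + 2^k ≤ s + 1`. The exponents of the chosen blocks strictly increase up to
the first index where they do not, and strictly decrease after it. Indeed, if the block at
`x' = x + 2^K` has exponent `K' ≤ K`, then `2^(K'+1) ∣ x'` (for `K' = K` because maximality
at `x` forces `x / 2^K` to be odd), so by maximality at `x'` a block of size `2^(K'+1)` does
not fit at `x'`, and the block after it must be smaller than `2^K'`.
-/

theorem Nat.two_pow_succ_dvd_add_two_pow {x k : ℕ} (h : 2 ^ k ∣ x) (h' : ¬ 2 ^ (k + 1) ∣ x) :
    2 ^ (k + 1) ∣ x + 2 ^ k := by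
  obtain ⟨t, rfl⟩ := h
  have ht : ¬ 2 ∣ t := fun ht => h' (by rw [pow_succ]; exact Nat.mul_dvd_mul_left _ ht)
  obtain ⟨u, rfl⟩ := Nat.odd_iff.mpr (Nat.two_dvd_ne_zero.mp ht)
  exact ⟨u + 1, by ring⟩

theorem Nat.two_mul_two_pow_le_two_pow {a b : ℕ} (h : a < b) : 2 * 2 ^ a ≤ 2 ^ b := by
  rw [← pow_succ']
  exact Nat.pow_le_pow_right two_pos h

theorem exists_strictly_rising_then_falling {α : Type*} [LinearOrder α] (e : ℕ → α) {m : ℕ}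
    (hm : 0 < m) (he : ∀ j, j + 2 < m → e (j + 1) ≤ e j → e (j + 2) < e (j + 1)) :
    ∃ m₀ < m, (∀ j, j + 1 ≤ m₀ → e j < e (j + 1)) ∧
      (∀ j, m₀ + 1 ≤ j → j + 1 < m → e (j + 1) < e j) := by
  have hex : ∃ j, m ≤ j + 1 ∨ e (j + 1) ≤ e j := ⟨m, by omega⟩
  have hm₀ : Nat.find hex < m := by
    have := Nat.find_min' hex (m := m - 1) (by omega)
    omega
  refine ⟨Nat.find hex, hm₀, fun j hj => ?_, fun j hj => ?_⟩
  · have := Nat.find_min hex (show j < Nat.find hex by omega)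
    push Not at this
    exact this.2
  · induction j, hj using Nat.le_induction with
    | base =>
      intro h
      refine he _ h ((Nat.find_spec hex).resolve_left ?_)
      omega
    | succ j _ ih =>
      intro h
      exact he j h (ih (by omega)).le

namespace GeometricCover

def IsCoverInterval (I : ℕ × ℕ) : Prop :=
  ∃ i k : ℕ, 1 ≤ i ∧ I.1 = i * 2 ^ k ∧ I.2 = (i + 1) * 2 ^ k - 1

def blockExp (s x : ℕ) : ℕ :=
  Nat.findGreatest (fun k => 2 ^ k ∣ x ∧ x + 2 ^ k ≤ s + 1) s

def nextStart (s x : ℕ) : ℕ := x + 2 ^ blockExp s x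

variable {s q x k : ℕ}

theorem two_pow_blockExp_dvd_and_le (hx : x ≤ s) :
    2 ^ blockExp s x ∣ x ∧ x + 2 ^ blockExp s x ≤ s + 1 :=
  Nat.findGreatest_spec (P := fun k => 2 ^ k ∣ x ∧ x + 2 ^ k ≤ s + 1) (Nat.zero_le s)
    ⟨one_dvd x, by omega⟩

theorem le_blockExp (hdvd : 2 ^ k ∣ x) (hle : x + 2 ^ k ≤ s + 1) : k ≤ blockExp s x := by
  have : k < 2 ^ k := Nat.lt_two_pow_self
  exact Nat.le_findGreatest (by omega) ⟨hdvd, hle⟩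

theorem isCoverInterval_block (hx₁ : 1 ≤ x) (hx : x ≤ s) :
    IsCoverInterval (x, nextStart s x - 1) := by
  obtain ⟨i, hi⟩ := (two_pow_blockExp_dvd_and_le hx).1
  refine ⟨i, blockExp s x, Nat.pos_of_ne_zero ?_, hi.trans (mul_comm _ _), ?_⟩
  · rintro rfl
    omega
  · show x + 2 ^ blockExp s x - 1 = _
    rw [add_mul, one_mul, mul_comm i, ← hi]

theorem two_pow_succ_dvd_nextStart (hfit : x + 2 ^ (blockExp s x + 1) ≤ s + 1) :
    2 ^ (blockExp s x + 1) ∣ nextStart s x := by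
  have hx : x ≤ s := by have := Nat.one_le_two_pow (n := blockExp s x + 1); omega
  refine Nat.two_pow_succ_dvd_add_two_pow (two_pow_blockExp_dvd_and_le hx).1 fun hdvd => ?_
  have := le_blockExp hdvd hfit
  omega

theorem blockExp_nextStart_nextStart_lt (hx : nextStart s (nextStart s x) ≤ s)
    (hle : blockExp s (nextStart s x) ≤ blockExp s x) :
    blockExp s (nextStart s (nextStart s x)) < blockExp s (nextStart s x) := by
  set x' := nextStart s x
  set K := blockExp s x
  set K' := blockExp s x'
  have hx'x : x' = x + 2 ^ K := rfl
  have hx' : x' ≤ s := le_trans (Nat.le_add_right _ _) hx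
  by_contra! hge
  have hfit : x' + 2 ^ (K' + 1) ≤ s + 1 := by
    have h₁ : x' + 2 ^ K' + 2 ^ blockExp s (nextStart s x') ≤ s + 1 :=
      (two_pow_blockExp_dvd_and_le hx).2
    have h₂ := Nat.pow_le_pow_right two_pos hge
    rw [pow_succ]
    omega
  have hdvd : 2 ^ (K' + 1) ∣ x' := by
    have hxs : x ≤ s := le_trans (Nat.le_add_right _ _) hx'
    rcases hle.lt_or_eq with hlt | heq
    · exact dvd_add ((pow_dvd_pow 2 hlt).trans (two_pow_blockExp_dvd_and_le hxs).1)
        (pow_dvd_pow 2 hlt)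
    · rw [heq] at hfit ⊢
      have hfit' : x + 2 ^ (K + 1) ≤ s + 1 := by
        rw [pow_succ] at hfit ⊢
        omega
      exact two_pow_succ_dvd_nextStart hfit'
  have := le_blockExp hdvd hfit
  omega

def blockStart (s q : ℕ) : ℕ → ℕ
  | 0 => q
  | j + 1 => nextStart s (blockStart s q j)

theorem add_le_blockStart (s q j : ℕ) : q + j ≤ blockStart s q j := by
  induction j with
  | zero => rfl
  | succ j ih =>
    have : 1 ≤ 2 ^ blockExp s (blockStart s q j) := Nat.one_le_two_pow
    change _ ≤ blockStart s q j + _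
    omega

theorem exists_blockStart_eq (hq : q ≤ s) :
    ∃ m, 0 < m ∧ (∀ j < m, blockStart s q j ≤ s) ∧ blockStart s q m = s + 1 := by
  have hex : ∃ j, s < blockStart s q j :=
    ⟨s + 1, by have := add_le_blockStart s q (s + 1); omega⟩
  have hpos : 0 < Nat.find hex := Nat.pos_of_ne_zero fun h => by
    have : s < blockStart s q 0 := h ▸ Nat.find_spec hex
    exact absurd hq (not_le.mpr this)
  have hbefore : ∀ j < Nat.find hex, blockStart s q j ≤ s := fun j hj =>
    not_lt.mp (Nat.find_min hex hj)
  refine ⟨Nat.find hex, hpos, hbefore, le_antisymm ?_ (Nat.find_spec hex)⟩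
  rw [← Nat.sub_add_cancel hpos]
  exact (two_pow_blockExp_dvd_and_le (hbefore _ (Nat.sub_lt hpos one_pos))).2

end GeometricCover

open GeometricCover in
/-- Any interval `[q,s]` of positive natural numbers can be partitioned into two
finite sequences of disjoint consecutive intervals
`(I_{-k}, …, I_0)` (indices `0, …, m0` of `L`) and `(I_1, …, I_p)`
(indices `m0+1, …, m-1` of `L`), all from the geometric cover and contained in
`[q,s]`, such that `|I_{-i}| / |I_{-i+1}| ≤ 1/2` for all `i ≥ 1` and
`|I_i| / |I_{i-1}| ≤ 1/2` for all `i ≥ 2`. -/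
theorem stmt1 (q s : ℕ) (hq : 1 ≤ q) (hqs : q ≤ s) :
    ∃ (m m0 : ℕ) (L : ℕ → ℕ × ℕ), 0 < m ∧ m0 < m ∧
      -- every interval belongs to the geometric cover
      (∀ j < m, ∃ i k : ℕ, 1 ≤ i ∧ (L j).1 = i * 2 ^ k ∧ (L j).2 = (i + 1) * 2 ^ k - 1) ∧
      -- the intervals are consecutive and partition [q, s]
      (L 0).1 = q ∧ (L (m - 1)).2 = s ∧
      (∀ j, j + 1 < m → (L (j + 1)).1 = (L j).2 + 1) ∧
      -- first sequence: each interval has length at most half of the next one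
      (∀ j, j + 1 ≤ m0 →
        2 * ((L j).2 + 1 - (L j).1) ≤ (L (j + 1)).2 + 1 - (L (j + 1)).1) ∧
      -- second sequence: each interval has length at most half of the previous one
      (∀ j, m0 + 1 ≤ j → j + 1 < m →
        2 * ((L (j + 1)).2 + 1 - (L (j + 1)).1) ≤ (L j).2 + 1 - (L j).1) := by
  obtain ⟨m, hm, ha_le, ha_end⟩ := exists_blockStart_eq hqs
  set a := blockStart s q
  have ha_pos (j : ℕ) : 1 ≤ a j :=
    hq.trans ((Nat.le_add_right q j).trans (add_le_blockStart s q j))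
  obtain ⟨m0, hm0, hrise, hfall⟩ := exists_strictly_rising_then_falling
    (fun j => blockExp s (a j)) hm fun j hj => blockExp_nextStart_nextStart_lt (ha_le (j + 2) hj)
  have hlen (j : ℕ) : a (j + 1) - 1 + 1 - a j = 2 ^ blockExp s (a j) := by
    change a j + 2 ^ blockExp s (a j) - 1 + 1 - a j = _
    have := Nat.one_le_two_pow (n := blockExp s (a j))
    omega
  refine ⟨m, m0, fun j => (a j, a (j + 1) - 1), hm, hm0,
    fun j hj => isCoverInterval_block (ha_pos j) (ha_le j hj), rfl, ?_,
    fun j _ => by have := ha_pos (j + 1); dsimp only; omega,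
    fun j hj => ?_, fun j hj hjm => ?_⟩
  · show a (m - 1 + 1) - 1 = s
    rw [Nat.sub_add_cancel hm, ha_end, Nat.add_sub_cancel]
  · simp only [hlen]
    exact Nat.two_mul_two_pow_le_two_pow (hrise j hj)
  · simp only [hlen]
    exact Nat.two_mul_two_pow_le_two_pow (hfall j hj hjm)
end

section
/- Any interval [q,s] of natural numbers can be partitioned into at most 2·⌈log₂(s − q + 2)⌉ disjoint intervals, each of which belongs to the geometric cover. -/
/-!
Write the length `n` of the interval as `2 ^ k + n'` with `k = log₂ n`. If `2 ^ log₂ n` divides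
the left end `q`, the binary digits of `n` cut `[q, q + n)` greedily from the left into at most
`log₂ n + 1` cover intervals, each aligned because all earlier ones were longer; symmetrically from
the right if `2 ^ log₂ n` divides the right end `q + n`. In general the first multiple of `2 ^ k`
after `q` splits the interval into a right-aligned piece and a left-aligned piece, each of length
at most `n`.
-/

/-- A partition of the half-open interval `[q, e)` into the `m` closed intervals
`[(L j).1, (L j).2]`, `j < m`, listed from left to right, each from the geometric cover. -/
structure IsGeometricPartition (q e m : ℕ) (L : ℕ → ℕ × ℕ) : Prop where
  pos : 0 < m
  mem_cover : ∀ j < m, ∃ i k : ℕ, 1 ≤ i ∧ (L j).1 = i * 2 ^ k ∧ (L j).2 = (i + 1) * 2 ^ k - 1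
  first : (L 0).1 = q
  last : (L (m - 1)).2 + 1 = e
  consecutive : ∀ j, j + 1 < m → (L (j + 1)).1 = (L j).2 + 1

def HasGeometricPartition (q e b : ℕ) : Prop :=
  ∃ m L, m ≤ b ∧ IsGeometricPartition q e m L

theorem IsGeometricPartition.append {q t e m₁ m₂ : ℕ} {L₁ L₂ : ℕ → ℕ × ℕ}
    (h₁ : IsGeometricPartition q t m₁ L₁) (h₂ : IsGeometricPartition t e m₂ L₂) :
    IsGeometricPartition q e (m₁ + m₂) (fun j => if j < m₁ then L₁ j else L₂ (j - m₁)) where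
  pos := by have := h₁.pos; omega
  mem_cover j hj := by
    by_cases h : j < m₁
    · simpa [h] using h₁.mem_cover j h
    · simpa [h] using h₂.mem_cover (j - m₁) (by omega)
  first := by simpa [h₁.pos] using h₁.first
  last := by
    have := h₂.pos
    simpa [show ¬m₁ + m₂ - 1 < m₁ by omega, show m₁ + m₂ - 1 - m₁ = m₂ - 1 by omega] using h₂.last
  consecutive j hj := by
    rcases lt_trichotomy (j + 1) m₁ with h | h | h
    · simpa [h, show j < m₁ by omega] using h₁.consecutive j h
    · simp only [h, lt_irrefl, if_false, show j < m₁ by omega, if_true, Nat.sub_self, h₂.first]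
      rw [← h₁.last, show j = m₁ - 1 by omega]
    · simpa [show ¬j + 1 < m₁ by omega, show ¬j < m₁ by omega,
        show j + 1 - m₁ = j - m₁ + 1 by omega] using h₂.consecutive (j - m₁) (by omega)

theorem log_sub_two_pow_log_lt {n : ℕ} (h : n - 2 ^ Nat.log 2 n ≠ 0) :
    Nat.log 2 (n - 2 ^ Nat.log 2 n) < Nat.log 2 n := by
  refine Nat.log_lt_of_lt_pow h ?_
  have := Nat.lt_pow_succ_log_self one_lt_two n
  rw [pow_succ] at this
  omega

namespace HasGeometricPartition

theorem mono {q e b b' : ℕ} (h : HasGeometricPartition q e b) (hb : b ≤ b') :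
    HasGeometricPartition q e b' :=
  let ⟨m, L, hm, hL⟩ := h
  ⟨m, L, hm.trans hb, hL⟩

theorem trans {q t e b₁ b₂ : ℕ} (h₁ : HasGeometricPartition q t b₁)
    (h₂ : HasGeometricPartition t e b₂) : HasGeometricPartition q e (b₁ + b₂) :=
  let ⟨m₁, _, hm₁, hL₁⟩ := h₁
  let ⟨m₂, _, hm₂, hL₂⟩ := h₂
  ⟨m₁ + m₂, _, Nat.add_le_add hm₁ hm₂, hL₁.append hL₂⟩

theorem block {a k : ℕ} (ha : 0 < a) (hdvd : 2 ^ k ∣ a) :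
    HasGeometricPartition a (a + 2 ^ k) 1 := by
  obtain ⟨i, rfl⟩ := hdvd
  have hk := Nat.two_pow_pos k
  refine ⟨1, fun _ => (2 ^ k * i, 2 ^ k * i + 2 ^ k - 1), le_rfl,
    ⟨one_pos, fun _ _ => ⟨i, k, ?_, by ring, ?_⟩, rfl, by omega, by omega⟩⟩
  · exact Nat.pos_of_mul_pos_left ha
  · rw [add_one_mul, mul_comm]

theorem of_dvd_left {n q : ℕ} (hq : 0 < q) (hn : 0 < n) (hdvd : 2 ^ Nat.log 2 n ∣ q) :
    HasGeometricPartition q (q + n) (Nat.log 2 n + 1) := by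
  induction n using Nat.strong_induction_on generalizing q with
  | _ n ih =>
  set k := Nat.log 2 n
  have hk : 2 ^ k ≤ n := Nat.pow_log_le_self 2 hn.ne'
  have hblock := block hq hdvd
  obtain hn' | hn' := Nat.eq_zero_or_pos (n - 2 ^ k)
  · rw [show n = 2 ^ k by omega]
    exact hblock.mono (by omega)
  have hlog : Nat.log 2 (n - 2 ^ k) < k := log_sub_two_pow_log_lt hn'.ne'
  have hrest := ih (n - 2 ^ k) (by omega) (by omega) hn'
    ((pow_dvd_pow 2 hlog.le).trans (dvd_add hdvd dvd_rfl))
  rw [add_assoc, Nat.add_sub_cancel' hk] at hrest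
  exact (hblock.trans hrest).mono (by omega)

theorem of_dvd_right {n q : ℕ} (hq : 0 < q) (hn : 0 < n) (hdvd : 2 ^ Nat.log 2 n ∣ q + n) :
    HasGeometricPartition q (q + n) (Nat.log 2 n + 1) := by
  induction n using Nat.strong_induction_on with
  | _ n ih =>
  set k := Nat.log 2 n
  have hk : 2 ^ k ≤ n := Nat.pow_log_le_self 2 hn.ne'
  have hdvd' : 2 ^ k ∣ q + (n - 2 ^ k) := by
    rw [← Nat.add_sub_assoc hk]
    exact Nat.dvd_sub hdvd dvd_rfl
  have hblock := block (by omega) hdvd'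
  rw [add_assoc, Nat.sub_add_cancel hk] at hblock
  obtain hn' | hn' := Nat.eq_zero_or_pos (n - 2 ^ k)
  · rw [hn', add_zero] at hblock
    exact hblock.mono (by omega)
  have hlog : Nat.log 2 (n - 2 ^ k) < k := log_sub_two_pow_log_lt hn'.ne'
  have hrest := ih (n - 2 ^ k) (by omega) hn' ((pow_dvd_pow 2 hlog.le).trans hdvd')
  exact (hrest.trans hblock).mono (by omega)

theorem exists_of_pos {n q : ℕ} (hq : 0 < q) (hn : 0 < n) :
    HasGeometricPartition q (q + n) (2 * (Nat.log 2 n + 1)) := by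
  set k := Nat.log 2 n
  have hk : 2 ^ k ≤ n := Nat.pow_log_le_self 2 hn.ne'
  by_cases hq' : 2 ^ k ∣ q
  · exact (of_dvd_left hq hn hq').mono (by omega)
  -- `q + d` is the first multiple of `2 ^ k` after `q`
  set d := 2 ^ k - q % 2 ^ k
  have hmod : 0 < q % 2 ^ k := Nat.pos_of_ne_zero (mt Nat.dvd_of_mod_eq_zero hq')
  have hmod' : q % 2 ^ k < 2 ^ k := Nat.mod_lt _ (Nat.two_pow_pos k)
  have hd : 2 ^ k ∣ q + d :=
    ⟨q / 2 ^ k + 1, by have := Nat.div_add_mod q (2 ^ k); rw [mul_add_one]; omega⟩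
  have hlogd : Nat.log 2 d ≤ k := Nat.log_mono_right (by omega)
  have hlognd : Nat.log 2 (n - d) ≤ k := Nat.log_mono_right (by omega)
  have hright := of_dvd_right hq (by omega : 0 < d) ((pow_dvd_pow 2 hlogd).trans hd)
  have hleft := of_dvd_left (by omega) (by omega : 0 < n - d) ((pow_dvd_pow 2 hlognd).trans hd)
  rw [add_assoc, Nat.add_sub_cancel' (by omega : d ≤ n)] at hleft
  exact (hright.trans hleft).mono (by omega)

end HasGeometricPartition

/-- Any interval `[q,s]` of positive natural numbers can be partitioned into at
most `2 * ⌈log₂ (s - q + 2)⌉` disjoint consecutive intervals, each belonging to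
the geometric cover `{[i * 2^k, (i+1) * 2^k - 1] : i ≥ 1, k ≥ 0}`. -/
theorem stmt2 (q s : ℕ) (hq : 1 ≤ q) (hqs : q ≤ s) :
    ∃ (m : ℕ) (L : ℕ → ℕ × ℕ), 0 < m ∧ m ≤ 2 * Nat.clog 2 (s - q + 2) ∧
      (∀ j < m, ∃ i k : ℕ, 1 ≤ i ∧ (L j).1 = i * 2 ^ k ∧ (L j).2 = (i + 1) * 2 ^ k - 1) ∧
      (L 0).1 = q ∧ (L (m - 1)).2 = s ∧
      (∀ j, j + 1 < m → (L (j + 1)).1 = (L j).2 + 1) := by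
  obtain ⟨m, L, hm, hL⟩ :=
    HasGeometricPartition.exists_of_pos (n := s - q + 1) (by omega : 0 < q) (by omega)
  have hlog : Nat.log 2 (s - q + 1) < Nat.clog 2 (s - q + 2) :=
    (Nat.lt_clog_iff_pow_lt (by norm_num)).2 (Nat.lt_succ_of_le (Nat.pow_log_le_self 2 (by omega)))
  exact ⟨m, L, hL.pos, by omega, hL.mem_cover, hL.first, by have := hL.last; omega,
    hL.consecutive⟩
end

section
/- The Specialist Aggregation Algorithm with uniform prior over K experts satisfies, for any fixed expert j, the mix-loss regret bound: the sum over rounds t in which expert j is awake of (−log(Σ_{k ∈ A_t} w_{t,k} e^{−ℓ_{t,k}}) − ℓ_{t,j}) is at most log K, where w_{t,k} = u_{t,k}·1{k ∈ A_t}/Σ_{i ∈ A_t} u_{t,i} and the weights are updated by u_{t+1,k} = u_{t,k} e^{−ℓ_{t,k}} (Σ_{i ∈ A_t} u_{t,i}) / (Σ_{i ∈ A_t} u_{t,i} e^{−ℓ_{t,i}}) for awake experts k ∈ A_t and u_{t+1,k} = u_{t,k} for sleeping experts. -/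
/-!
Sleeping experts keep their weight, and the awake ones are reweighted so that their total mass is
unchanged, so `u t` remains a probability vector. When `j` is awake its weight is multiplied by
`e^{-ℓ_{t,j}}` divided by the exponential of the mix-loss, so the regret of every round is
`log u_{t+1,j} - log u_{t,j}`. The regret therefore telescopes to
`log u_{n+1,j} - log (1/K) ≤ log K`.
-/

open Finset Real

section

variable {ι : Type*} [DecidableEq ι]

noncomputable def specialistUpdate (s : Finset ι) (ℓ u : ι → ℝ) (k : ι) : ℝ :=
  if k ∈ s then u k * exp (-ℓ k) * (∑ i ∈ s, u i) / ∑ i ∈ s, u i * exp (-ℓ i) else u k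

variable {s : Finset ι} {ℓ u : ι → ℝ}

lemma specialistUpdate_pos (hs : s.Nonempty) (hu : ∀ k, 0 < u k) (k : ι) :
    0 < specialistUpdate s ℓ u k := by
  unfold specialistUpdate
  split_ifs
  · have hS := sum_pos (fun i _ ↦ hu i) hs
    have hM := sum_pos (fun i _ ↦ mul_pos (hu i) (exp_pos (-ℓ i))) hs
    have huk := hu k
    positivity
  · exact hu k

lemma sum_specialistUpdate [Fintype ι] (hM : ∑ i ∈ s, u i * exp (-ℓ i) ≠ 0) :
    ∑ k, specialistUpdate s ℓ u k = ∑ k, u k := by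
  unfold specialistUpdate
  rw [← sum_add_sum_compl s, ← sum_add_sum_compl s u]
  congr 1
  · rw [sum_congr rfl fun k hk ↦ if_pos hk, ← sum_div, ← sum_mul, mul_div_cancel_left₀ _ hM]
  · exact sum_congr rfl fun k hk ↦ if_neg (mem_compl.mp hk)

lemma log_specialistUpdate_sub_log (hs : s.Nonempty) (hu : ∀ k, 0 < u k) (j : ι) :
    log (specialistUpdate s ℓ u j) - log (u j) =
      if j ∈ s then -log (∑ k ∈ s, u k / (∑ i ∈ s, u i) * exp (-ℓ k)) - ℓ j else 0 := by
  unfold specialistUpdate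
  split_ifs with hj
  · have hS := sum_pos (fun i _ ↦ hu i) hs
    have hM := sum_pos (fun i _ ↦ mul_pos (hu i) (exp_pos (-ℓ i))) hs
    have hmix : ∑ k ∈ s, u k / (∑ i ∈ s, u i) * exp (-ℓ k) =
        (∑ i ∈ s, u i * exp (-ℓ i)) / ∑ i ∈ s, u i := by
      rw [sum_div]
      exact sum_congr rfl fun k _ ↦ by ring
    have huj := hu j
    rw [hmix, log_div hM.ne' hS.ne', log_div (by positivity) hM.ne', log_mul (by positivity) hS.ne',
      log_mul huj.ne' (exp_pos _).ne', log_exp]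
    ring
  · ring

end

open Finset in
/-- Mix-loss regret bound for the Specialist Aggregation Algorithm with uniform
prior over `K` experts: for any fixed expert `j`, the sum over rounds where `j`
is awake of `(-log (∑_{k ∈ A_t} w_{t,k} e^{-ℓ_{t,k}}) - ℓ_{t,j})` is at most
`log K`. -/
theorem stmt3 (K n : ℕ) (hK : 0 < K)
    (A : ℕ → Finset (Fin K)) (hA : ∀ t, (A t).Nonempty)
    (ℓ : ℕ → Fin K → ℝ)
    (u w : ℕ → Fin K → ℝ)
    (hu1 : ∀ k, u 1 k = 1 / K)
    (hw : ∀ t k, w t k = if k ∈ A t then u t k / ∑ i ∈ A t, u t i else 0)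
    (hupd : ∀ t k, k ∈ A t →
      u (t + 1) k = u t k * Real.exp (-ℓ t k) * (∑ i ∈ A t, u t i)
        / ∑ i ∈ A t, u t i * Real.exp (-ℓ t i))
    (hfreeze : ∀ t k, k ∉ A t → u (t + 1) k = u t k)
    (j : Fin K) :
    ∑ t ∈ Finset.Icc 1 n,
        (if j ∈ A t then
          -Real.log (∑ k ∈ A t, w t k * Real.exp (-ℓ t k)) - ℓ t j
        else 0)
      ≤ Real.log K := by
  have hstep : ∀ t, u (t + 1) = specialistUpdate (A t) (ℓ t) (u t) := fun t ↦ funext fun k ↦ by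
    unfold specialistUpdate
    split_ifs with hk
    exacts [hupd t k hk, hfreeze t k hk]
  have hpos : ∀ t ≥ 1, ∀ k, 0 < u t k := by
    refine Nat.le_induction (fun k ↦ by rw [hu1]; positivity) fun t _ ih ↦ ?_
    rw [hstep]
    exact specialistUpdate_pos (hA t) ih
  have hmass : ∀ t ≥ 1, ∑ k, u t k = 1 := by
    refine Nat.le_induction (by simp [hu1, hK.ne']) fun t ht ih ↦ ?_
    rw [hstep, sum_specialistUpdate, ih]
    exact (sum_pos (fun i _ ↦ mul_pos (hpos t ht i) (exp_pos _)) (hA t)).ne'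
  have hround : ∀ t ∈ Icc 1 n, (if j ∈ A t then
      -log (∑ k ∈ A t, w t k * exp (-ℓ t k)) - ℓ t j else 0) =
        log (u (t + 1) j) - log (u t j) := fun t ht ↦ by
    rw [hstep, log_specialistUpdate_sub_log (hA t) (hpos t (mem_Icc.mp ht).1),
      sum_congr rfl fun k hk ↦ by rw [hw, if_pos hk]]
  have hlast : u (n + 1) j ≤ 1 :=
    hmass (n + 1) (by omega) ▸ single_le_sum (fun k _ ↦ (hpos (n + 1) (by omega) k).le) (mem_univ j)
  calc _ = log (u (n + 1) j) - log (u 1 j) := by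
        rw [sum_congr rfl hround, ← Ico_add_one_right_eq_Icc]
        exact sum_Ico_sub (fun t ↦ log (u t j)) (by omega)
    _ ≤ 0 - log (1 / K) := by
        rw [hu1]
        gcongr
        exact log_nonpos (hpos (n + 1) (by omega) j).le hlast
    _ = log K := by rw [one_div, log_inv]; ring
end

section
/- The squared loss f(x) = (y − x)² restricted to x, y ∈ [−D, D] is η-exp-concave for η = 1/(8D²): for any probability weights w_k and points x_k ∈ [−D, D], Σ_k w_k e^{−η (y − x_k)²} ≤ e^{−η (y − Σ_k w_k x_k)²}. -/
/-! The map `x ↦ exp (-η (y - x)²)` is a Gaussian bump centred at `y`; its second derivative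
`(4η²(y - x)² - 2η) exp (-η (y - x)²)` is nonpositive as long as `2η (y - x)² ≤ 1`, so it is
concave on the interval of radius `r` around `y` whenever `2η r² ≤ 1`. For `x, y ∈ [-D, D]` we
have `|y - x| ≤ 2D`, and `η = 1 / (8D²)` makes `2η (2D)² ≤ 1`;
the inequality is then Jensen's inequality for this concave function. -/

open Set

namespace Real

lemma hasDerivAt_exp_neg_mul_sub_sq (η y x : ℝ) :
    HasDerivAt (fun x => exp (-η * (y - x) ^ 2))
      (2 * η * (y - x) * exp (-η * (y - x) ^ 2)) x := by
  have h : HasDerivAt (fun x => -η * (y - x) ^ 2) (2 * η * (y - x)) x := by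
    refine ((((hasDerivAt_id' x).const_sub y).pow 2).const_mul (-η)).congr_deriv ?_
    ring
  simpa only [mul_comm] using h.exp

lemma concaveOn_exp_neg_mul_sub_sq {η r : ℝ} (hη : 0 ≤ η) (hr : 2 * η * r ^ 2 ≤ 1) (y : ℝ) :
    ConcaveOn ℝ (Icc (y - r) (y + r)) (fun x => exp (-η * (y - x) ^ 2)) := by
  refine concaveOn_of_hasDerivWithinAt2_nonpos (convex_Icc _ _)
    (f' := fun x => 2 * η * (y - x) * exp (-η * (y - x) ^ 2))
    (f'' := fun x => (4 * η ^ 2 * (y - x) ^ 2 - 2 * η) * exp (-η * (y - x) ^ 2))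
    (by fun_prop) (fun x _ => (hasDerivAt_exp_neg_mul_sub_sq η y x).hasDerivWithinAt)
    (fun x _ => ?_) (fun x hx => ?_)
  · refine (((((hasDerivAt_id' x).const_sub y).const_mul (2 * η)).mul
      (hasDerivAt_exp_neg_mul_sub_sq η y x)).congr_deriv ?_).hasDerivWithinAt
    ring
  · obtain ⟨hxl, hxr⟩ := interior_subset hx
    have hsq : (y - x) ^ 2 ≤ r ^ 2 := sq_le_sq' (by linarith) (by linarith)
    have hcoeff : 4 * η ^ 2 * (y - x) ^ 2 - 2 * η ≤ 0 := by
      nlinarith [mul_le_mul_of_nonneg_left hsq (by positivity : 0 ≤ 4 * η ^ 2)]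
    exact mul_nonpos_of_nonpos_of_nonneg hcoeff (exp_pos _).le

end Real

theorem stmt5_general (D : ℝ) (y : ℝ) (hy : |y| ≤ D)
    (m : ℕ) (w x : Fin m → ℝ)
    (hw : ∀ k, 0 ≤ w k) (hw1 : ∑ k, w k = 1) (hx : ∀ k, |x k| ≤ D) :
    ∑ k, w k * Real.exp (-(1 / (8 * D ^ 2)) * (y - x k) ^ 2)
      ≤ Real.exp (-(1 / (8 * D ^ 2)) * (y - ∑ k, w k * x k) ^ 2) := by
  have hη : 2 * (1 / (8 * D ^ 2)) * (2 * D) ^ 2 ≤ 1 := by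
    rw [show 2 * (1 / (8 * D ^ 2)) * (2 * D) ^ 2 = 8 * D ^ 2 / (8 * D ^ 2) by ring]
    exact div_self_le_one _
  have hconc := Real.concaveOn_exp_neg_mul_sub_sq (by positivity) hη y
  have hmem : ∀ k ∈ Finset.univ, x k ∈ Icc (y - 2 * D) (y + 2 * D) := fun k _ => by
    obtain ⟨hy₁, hy₂⟩ := abs_le.mp hy
    obtain ⟨hx₁, hx₂⟩ := abs_le.mp (hx k)
    constructor <;> linarith
  simpa only [smul_eq_mul] using hconc.le_map_sum (fun k _ => hw k) hw1 hmem

/-- The squared loss `f(x) = (y - x)^2` restricted to `x, y ∈ [-D, D]` is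
`η`-exp-concave for `η = 1 / (8 D^2)`: for any probability weights `w_k` and
points `x_k ∈ [-D, D]`,
`∑_k w_k e^{-η (y - x_k)^2} ≤ e^{-η (y - ∑_k w_k x_k)^2}`. -/
theorem stmt5 (D : ℝ) (hD : 0 < D) (y : ℝ) (hy : |y| ≤ D)
    (m : ℕ) (w x : Fin m → ℝ)
    (hw : ∀ k, 0 ≤ w k) (hw1 : ∑ k, w k = 1) (hx : ∀ k, |x k| ≤ D) :
    ∑ k, w k * Real.exp (-(1 / (8 * D ^ 2)) * (y - x k) ^ 2)
      ≤ Real.exp (-(1 / (8 * D ^ 2)) * (y - ∑ k, w k * x k) ^ 2) :=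
  stmt5_general D y hy m w x hw hw1 hx
end

section
/- Let θ⁽¹⁾,…,θ⁽ᵐ⁾ be real numbers with |θ⁽ⁱ⁾| ≤ B for some B > 0, let p(1),…,p(m) be positive integers with Σᵢ p(i) ≤ n, and let C_n = Σ_{i=1}^{m−1} |θ⁽ⁱ⁺¹⁾ − θ⁽ⁱ⁾|. Then there exists a partition of {1,…,m} into M consecutive blocks such that: (1) every block except possibly the last satisfies V(block) ≤ B/√(Σ_{k ∈ block} p(k)), where V([i,j]) = Σ_{k=i}^{j−1} |θ⁽ᵏ⁺¹⁾ − θ⁽ᵏ⁾|; (2) the last block with its final element removed also satisfies this inequality; and (3) M ≤ max{3 n^{1/3} C_n^{2/3} B^{−2/3}, 1}. -/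
/-!
Cut greedily: each block is extended as far as it stays short. Then every block `(r i, r (i+1)]`
but the last stops being short once extended by one element, i.e. `B < V i * √(P i)` with `V i`
its variation and `P i` the weight of the extended block. Hölder's inequality with exponents
`1` and `2` gives `(M - 1) B^{2/3} ≤ ∑ (V i * √(P i))^{2/3} ≤ (∑ V i)^{2/3} (∑ P i)^{1/3}`, and
`∑ V i ≤ C`, `∑ P i ≤ 2n` because the blocks are disjoint and the extended blocks cover every
index at most twice. Finally `M ≤ 2 (M - 1)` and `2 · 2^{1/3} ≤ 3`.
-/

open Finset

-- `r` cuts `(s, m]` into the blocks `(r i, r (i + 1)]`, `i < M`.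
structure IsGreedyPartition (P : ℕ → ℕ → Prop) (s m M : ℕ) (r : ℕ → ℕ) : Prop where
  pos : 0 < M
  start : r 0 = s
  finish : r M = m
  monotone : Monotone r
  lt_succ : ∀ i < M, r i < r (i + 1)
  good : ∀ i < M, P (r i) (r (i + 1))
  maximal : ∀ i, i + 1 < M → ¬ P (r i) (r (i + 1) + 1)

namespace IsGreedyPartition

variable {P : ℕ → ℕ → Prop} {s e m M : ℕ} {r : ℕ → ℕ}

theorem single (hsm : s < m) (hP : P s m) :
    IsGreedyPartition P s m 1 (fun | 0 => s | _ + 1 => m) where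
  pos := one_pos
  start := rfl
  finish := rfl
  monotone := monotone_nat_of_le_succ fun | 0 => hsm.le | _ + 1 => le_rfl
  lt_succ := fun | 0, _ => hsm
  good := fun | 0, _ => hP
  maximal := fun _ h => absurd h (by omega)

theorem cons (h : IsGreedyPartition P e m M r) (hse : s < r 0) (hP : P s (r 0))
    (hmax : ¬ P s (r 0 + 1)) :
    IsGreedyPartition P s m (M + 1) (fun | 0 => s | i + 1 => r i) where
  pos := M.succ_pos
  start := rfl
  finish := h.finish
  monotone := monotone_nat_of_le_succ fun
    | 0 => hse.le
    | i + 1 => h.monotone i.le_succ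
  lt_succ := fun
    | 0, _ => hse
    | i + 1, hi => h.lt_succ i (by omega)
  good := fun
    | 0, _ => hP
    | i + 1, hi => h.good i (by omega)
  maximal := fun
    | 0, _ => hmax
    | i + 1, hi => h.maximal i (by omega)

theorem lt_finish (h : IsGreedyPartition P s m M r) {i : ℕ} (hi : i < M) : r i < m :=
  h.finish ▸ (h.lt_succ i hi).trans_le (h.monotone hi)

end IsGreedyPartition

theorem exists_isGreedyPartition {P : ℕ → ℕ → Prop} (hP : ∀ s, P s (s + 1)) {s m : ℕ}
    (hsm : s < m) : ∃ M r, IsGreedyPartition P s m M r := by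
  classical
  set e := Nat.findGreatest (fun r => s < r ∧ P s r) m
  obtain ⟨hse, hPe⟩ : s < e ∧ P s e :=
    Nat.findGreatest_spec (P := fun r => s < r ∧ P s r) hsm ⟨s.lt_succ_self, hP s⟩
  rcases (Nat.findGreatest_le m : e ≤ m).lt_or_eq with hem | hem
  · obtain ⟨M, r, hr⟩ := exists_isGreedyPartition hP hem
    refine ⟨M + 1, _, hr.cons (hr.start ▸ hse) (hr.start ▸ hPe) fun h => ?_⟩
    rw [hr.start] at h
    exact Nat.findGreatest_is_greatest e.lt_succ_self hem ⟨hse.trans e.lt_succ_self, h⟩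
  · exact ⟨1, _, .single hsm (hem ▸ hPe)⟩
termination_by m - s

theorem sum_range_sum_Ioc {β : Type*} [AddCommMonoid β] {r : ℕ → ℕ} (hr : Monotone r)
    (f : ℕ → β) (j : ℕ) :
    ∑ i ∈ range j, ∑ k ∈ Ioc (r i) (r (i + 1)), f k = ∑ k ∈ Ioc (r 0) (r j), f k := by
  induction j with
  | zero => simp
  | succ j ih =>
    rw [sum_range_succ, ih, sum_Ioc_consecutive f (hr j.zero_le) (hr j.le_succ)]

theorem sum_mul_sqrt_rpow_two_thirds_le {ι : Type*} (t : Finset ι) {V P : ι → ℝ}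
    (hV : ∀ i ∈ t, 0 ≤ V i) (hP : ∀ i ∈ t, 0 ≤ P i) :
    ∑ i ∈ t, (V i * √(P i)) ^ ((2 : ℝ) / 3)
      ≤ (∑ i ∈ t, V i) ^ ((2 : ℝ) / 3) * (∑ i ∈ t, P i) ^ ((1 : ℝ) / 3) := by
  have holder : Real.HolderTriple 1 2 (2 / 3) := ⟨by norm_num, by norm_num, by norm_num⟩
  convert Real.Lr_rpow_le_Lp_mul_Lq_of_nonneg t holder hV (fun i _ => Real.sqrt_nonneg (P i))
    using 3 with i hi
  · simp
  · norm_num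
  · refine sum_congr rfl fun i hi => ?_
    rw [Real.rpow_two, Real.sq_sqrt (hP i hi)]
  · norm_num

theorem two_mul_two_rpow_one_third_le_three : 2 * (2 : ℝ) ^ ((1 : ℝ) / 3) ≤ 3 := by
  have hcube : ((2 : ℝ) ^ ((1 : ℝ) / 3)) ^ 3 = 2 := by
    rw [← Real.rpow_natCast, ← Real.rpow_mul zero_le_two]; norm_num
  have : (2 : ℝ) ^ ((1 : ℝ) / 3) ≤ 3 / 2 :=
    le_of_pow_le_pow_left₀ three_ne_zero (by norm_num) (by rw [hcube]; norm_num)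
  linarith

section ShortBlocks

variable (θ : ℕ → ℝ) (p : ℕ → ℕ) (B : ℝ)

-- The block is `{s + 1, …, r}`; its variation only involves the jumps inside it, hence `r - 1`.
def IsShortBlock (s r : ℕ) : Prop :=
  ∑ k ∈ Ioc s (r - 1), |θ (k + 1) - θ k| ≤ B / √(∑ k ∈ Ioc s r, (p k : ℝ))

variable {θ p B}

theorem isShortBlock_succ (hB : 0 ≤ B) (s : ℕ) : IsShortBlock θ p B s (s + 1) := by
  simpa [IsShortBlock] using div_nonneg hB (Real.sqrt_nonneg _)

theorem sum_Ioc_cast_pos {s r : ℕ} (hsr : s < r) (hp : ∀ k ∈ Ioc s r, 0 < p k) :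
    0 < ∑ k ∈ Ioc s r, (p k : ℝ) :=
  sum_pos (fun k hk => Nat.cast_pos.2 (hp k hk)) (nonempty_Ioc.2 hsr)

theorem IsShortBlock.of_le {s r r' : ℕ} (h : IsShortBlock θ p B s r) (hB : 0 ≤ B)
    (hr' : r' ≤ r) (hp : ∀ k ∈ Ioc s r', 0 < p k) : IsShortBlock θ p B s r' := by
  rcases lt_or_ge s (r' - 1) with hs | hs
  · calc ∑ k ∈ Ioc s (r' - 1), |θ (k + 1) - θ k|
        ≤ ∑ k ∈ Ioc s (r - 1), |θ (k + 1) - θ k| :=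
          sum_le_sum_of_subset_of_nonneg (Ioc_subset_Ioc_right (by omega))
            fun _ _ _ => abs_nonneg _
      _ ≤ B / √(∑ k ∈ Ioc s r, (p k : ℝ)) := h
      _ ≤ B / √(∑ k ∈ Ioc s r', (p k : ℝ)) := by
          gcongr
          exact Real.sqrt_pos.2 (sum_Ioc_cast_pos (by omega) hp)
  · simpa [IsShortBlock, Ioc_eq_empty_of_le hs] using div_nonneg hB (Real.sqrt_nonneg _)

theorem lt_mul_sqrt_of_not_isShortBlock {s r : ℕ} (h : ¬ IsShortBlock θ p B s (r + 1))
    (hsr : s ≤ r) (hp : ∀ k ∈ Ioc s (r + 1), 0 < p k) :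
    B < (∑ k ∈ Ioc s r, |θ (k + 1) - θ k|) * √(∑ k ∈ Ioc s (r + 1), (p k : ℝ)) := by
  rw [IsShortBlock, Nat.add_sub_cancel, not_le,
    div_lt_iff₀ (Real.sqrt_pos.2 (sum_Ioc_cast_pos (by omega) hp))] at h
  exact h

end ShortBlocks

theorem IsGreedyPartition.pred_mul_rpow_le {θ : ℕ → ℝ} {p : ℕ → ℕ} {B : ℝ} {s m M : ℕ}
    {r : ℕ → ℕ} (hr : IsGreedyPartition (IsShortBlock θ p B) s m M r) (hB : 0 ≤ B)
    (hp : ∀ k ∈ Ioc s m, 0 < p k) :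
    ((M - 1 : ℕ) : ℝ) * B ^ ((2 : ℝ) / 3)
      ≤ (∑ k ∈ Ioc s (m - 1), |θ (k + 1) - θ k|) ^ ((2 : ℝ) / 3)
        * (2 * ∑ k ∈ Ioc s m, (p k : ℝ)) ^ ((1 : ℝ) / 3) := by
  have hM := hr.pos
  set K := M - 1 with hK
  set V : ℕ → ℝ := fun i => ∑ k ∈ Ioc (r i) (r (i + 1)), |θ (k + 1) - θ k|
  set P : ℕ → ℝ := fun i => ∑ k ∈ Ioc (r i) (r (i + 1) + 1), (p k : ℝ)
  set Q : ℕ → ℝ := fun i => ∑ k ∈ Ioc (r i) (r (i + 1)), (p k : ℝ)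
  have hs : ∀ i, s ≤ r i := fun i => hr.start ▸ hr.monotone i.zero_le
  have hsub : ∀ {a b : ℕ}, b ≤ m → ∑ k ∈ Ioc (r a) b, (p k : ℝ) ≤ ∑ k ∈ Ioc s m, (p k : ℝ) :=
    fun hb => sum_le_sum_of_subset_of_nonneg (Ioc_subset_Ioc (hs _) hb)
      fun _ _ _ => Nat.cast_nonneg _
  have hfail : ∀ i < K, B ≤ V i * √(P i) := fun i hi =>
    (lt_mul_sqrt_of_not_isShortBlock (hr.maximal i (by omega)) (hr.monotone i.le_succ)
      fun k hk => hp k (Ioc_subset_Ioc (hs i) (hr.lt_finish (i := i + 1) (by omega)) hk)).le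
  have hV : ∑ i ∈ range K, V i ≤ ∑ k ∈ Ioc s (m - 1), |θ (k + 1) - θ k| := by
    rw [sum_range_sum_Ioc hr.monotone, hr.start]
    have := hr.lt_finish (i := K) (by omega)
    exact sum_le_sum_of_subset_of_nonneg (Ioc_subset_Ioc_right (by omega))
      fun _ _ _ => abs_nonneg _
  -- the extended block `i` lies inside the blocks `i` and `i + 1`
  have hP : ∑ i ∈ range K, P i ≤ 2 * ∑ k ∈ Ioc s m, (p k : ℝ) := calc
    ∑ i ∈ range K, P i ≤ ∑ i ∈ range K, (Q i + Q (i + 1)) := by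
      refine sum_le_sum fun i hi => ?_
      have hlt := hr.lt_succ (i + 1) (by have := mem_range.1 hi; omega)
      rw [sum_Ioc_consecutive _ (hr.monotone i.le_succ) (hr.monotone (i + 1).le_succ)]
      exact sum_le_sum_of_subset_of_nonneg (Ioc_subset_Ioc_right hlt)
        fun _ _ _ => Nat.cast_nonneg _
    _ = ∑ k ∈ Ioc (r 0) (r K), (p k : ℝ) + ∑ k ∈ Ioc (r 1) (r (K + 1)), (p k : ℝ) := by
      rw [sum_add_distrib, sum_range_sum_Ioc hr.monotone]
      congr 1
      exact sum_range_sum_Ioc (r := fun i => r (i + 1))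
        (hr.monotone.comp fun _ _ h => Nat.add_le_add_right h 1) _ K
    _ ≤ 2 * ∑ k ∈ Ioc s m, (p k : ℝ) := by
      have hKM : K + 1 = M := by omega
      linarith [hsub (a := 0) (hr.lt_finish (i := K) (by omega)).le,
        hsub (a := 1) (b := r (K + 1)) (hKM ▸ hr.finish).le]
  calc ((K : ℕ) : ℝ) * B ^ ((2 : ℝ) / 3) = ∑ i ∈ range K, B ^ ((2 : ℝ) / 3) := by simp
    _ ≤ ∑ i ∈ range K, (V i * √(P i)) ^ ((2 : ℝ) / 3) :=
      sum_le_sum fun i hi => Real.rpow_le_rpow hB (hfail i (mem_range.1 hi)) (by norm_num)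
    _ ≤ (∑ i ∈ range K, V i) ^ ((2 : ℝ) / 3) * (∑ i ∈ range K, P i) ^ ((1 : ℝ) / 3) :=
      sum_mul_sqrt_rpow_two_thirds_le _ (fun _ _ => sum_nonneg fun _ _ => abs_nonneg _)
        fun _ _ => sum_nonneg fun _ _ => Nat.cast_nonneg _
    _ ≤ _ := by gcongr

theorem natCast_le_max_of_pred_mul_rpow_le {M : ℕ} {n C B : ℝ} (hn : 0 ≤ n) (hC : 0 ≤ C)
    (hB : 0 < B)
    (h : ((M - 1 : ℕ) : ℝ) * B ^ ((2 : ℝ) / 3) ≤ C ^ ((2 : ℝ) / 3) * (2 * n) ^ ((1 : ℝ) / 3)) :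
    (M : ℝ) ≤ max (3 * n ^ ((1 : ℝ) / 3) * C ^ ((2 : ℝ) / 3) * B ^ (-(2 : ℝ) / 3)) 1 := by
  rcases le_or_gt M 1 with hM | hM
  · exact le_max_of_le_right (by exact_mod_cast hM)
  refine le_max_of_le_left ?_
  set X := n ^ ((1 : ℝ) / 3) * C ^ ((2 : ℝ) / 3) * B ^ (-(2 : ℝ) / 3)
  have hX : 0 ≤ X := by positivity
  have hB' : B ^ ((2 : ℝ) / 3) * B ^ (-(2 : ℝ) / 3) = 1 := by
    rw [← Real.rpow_add hB]; norm_num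
  have hK : ((M - 1 : ℕ) : ℝ) ≤ 2 ^ ((1 : ℝ) / 3) * X := calc
    ((M - 1 : ℕ) : ℝ) = ((M - 1 : ℕ) : ℝ) * B ^ ((2 : ℝ) / 3) * B ^ (-(2 : ℝ) / 3) := by
      rw [mul_assoc, hB', mul_one]
    _ ≤ C ^ ((2 : ℝ) / 3) * (2 * n) ^ ((1 : ℝ) / 3) * B ^ (-(2 : ℝ) / 3) := by gcongr
    _ = 2 ^ ((1 : ℝ) / 3) * X := by rw [Real.mul_rpow zero_le_two hn]; ring
  have hMK : (M : ℝ) ≤ 2 * ((M - 1 : ℕ) : ℝ) := by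
    have : (2 : ℝ) ≤ M := by exact_mod_cast hM
    rw [Nat.cast_sub hM.le]; push_cast; linarith
  calc (M : ℝ) ≤ (2 * 2 ^ ((1 : ℝ) / 3)) * X := by linarith
    _ ≤ 3 * X := mul_le_mul_of_nonneg_right two_mul_two_rpow_one_third_le_three hX
    _ = _ := by ring

open Finset in
theorem stmt6_general (n m : ℕ) (hm : 0 < m) (θ : ℕ → ℝ) (B : ℝ) (hB : 0 < B)
    (p : ℕ → ℕ) (hp : ∀ i, 1 ≤ i → i ≤ m → 0 < p i)
    (hpn : ∑ i ∈ Finset.Icc 1 m, p i ≤ n)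
    (C : ℝ) (hC : C = ∑ i ∈ Finset.Icc 1 (m - 1), |θ (i + 1) - θ i|) :
    ∃ (M : ℕ) (r : ℕ → ℕ), 0 < M ∧ r 0 = 0 ∧ r M = m ∧
      (∀ i < M, r i < r (i + 1)) ∧
      -- (1) every block except possibly the last
      (∀ i, 1 ≤ i → i < M →
        (∑ k ∈ Finset.Icc (r (i - 1) + 1) (r i - 1), |θ (k + 1) - θ k|)
          ≤ B / Real.sqrt (∑ k ∈ Finset.Icc (r (i - 1) + 1) (r i), (p k : ℝ))) ∧
      -- (2) the last block with its final element removed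
      ((∑ k ∈ Finset.Icc (r (M - 1) + 1) (m - 2), |θ (k + 1) - θ k|)
          ≤ B / Real.sqrt (∑ k ∈ Finset.Icc (r (M - 1) + 1) (m - 1), (p k : ℝ))) ∧
      -- (3) bound on the number of blocks
      (M : ℝ) ≤ max (3 * (n : ℝ) ^ ((1 : ℝ) / 3) * C ^ ((2 : ℝ) / 3)
        * B ^ (-(2 : ℝ) / 3)) 1 := by
  have hp' : ∀ k ∈ Ioc 0 m, 0 < p k := fun k hk => hp k (mem_Ioc.1 hk).1 (mem_Ioc.1 hk).2
  have hIcc : ∀ b, Icc 1 b = Ioc 0 b := Icc_add_one_left_eq_Ioc 0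
  obtain ⟨M, r, hr⟩ := exists_isGreedyPartition (isShortBlock_succ (θ := θ) (p := p) hB.le) hm
  refine ⟨M, r, hr.pos, hr.start, hr.finish, hr.lt_succ, fun i hi hiM => ?_, ?_, ?_⟩
  · have := hr.good (i - 1) (by omega)
    rwa [Nat.sub_add_cancel hi, IsShortBlock, ← Icc_add_one_left_eq_Ioc,
      ← Icc_add_one_left_eq_Ioc] at this
  · have hlast := hr.good (M - 1) (Nat.sub_lt hr.pos one_pos)
    rw [Nat.sub_one_add_one hr.pos.ne', hr.finish] at hlast
    rw [Icc_add_one_left_eq_Ioc, Icc_add_one_left_eq_Ioc, show m - 2 = m - 1 - 1 by omega]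
    exact hlast.of_le hB.le (m.sub_le 1)
      fun k hk => hp' k (Ioc_subset_Ioc (Nat.zero_le _) (m.sub_le 1) hk)
  · have hpn' : ∑ k ∈ Ioc 0 m, (p k : ℝ) ≤ n := by exact_mod_cast hIcc m ▸ hpn
    refine natCast_le_max_of_pred_mul_rpow_le n.cast_nonneg
      (hC ▸ sum_nonneg fun _ _ => abs_nonneg _) hB ?_
    calc _ ≤ _ := hr.pred_mul_rpow_le hB.le hp'
      _ ≤ C ^ ((2 : ℝ) / 3) * (2 * n) ^ ((1 : ℝ) / 3) := by rw [hC, hIcc]; gcongr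

open Finset in
/-- Greedy partitioning of a bounded sequence of total variation `C_n` into
`M ≤ max {3 n^{1/3} C_n^{2/3} B^{-2/3}, 1}` consecutive blocks, where every
block except possibly the last (and the last block with its final element
removed) has total variation at most `B / √(∑_{k ∈ block} p(k))`. Blocks are
`[r(i-1)+1, r i]` for `i = 1, …, M` with `r 0 = 0` and `r M = m`. -/
theorem stmt6 (n m : ℕ) (hm : 0 < m) (θ : ℕ → ℝ) (B : ℝ) (hB : 0 < B)
    (hθ : ∀ i, 1 ≤ i → i ≤ m → |θ i| ≤ B)
    (p : ℕ → ℕ) (hp : ∀ i, 1 ≤ i → i ≤ m → 0 < p i)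
    (hpn : ∑ i ∈ Finset.Icc 1 m, p i ≤ n)
    (C : ℝ) (hC : C = ∑ i ∈ Finset.Icc 1 (m - 1), |θ (i + 1) - θ i|) :
    ∃ (M : ℕ) (r : ℕ → ℕ), 0 < M ∧ r 0 = 0 ∧ r M = m ∧
      (∀ i < M, r i < r (i + 1)) ∧
      -- (1) every block except possibly the last
      (∀ i, 1 ≤ i → i < M →
        (∑ k ∈ Finset.Icc (r (i - 1) + 1) (r i - 1), |θ (k + 1) - θ k|)
          ≤ B / Real.sqrt (∑ k ∈ Finset.Icc (r (i - 1) + 1) (r i), (p k : ℝ))) ∧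
      -- (2) the last block with its final element removed
      ((∑ k ∈ Finset.Icc (r (M - 1) + 1) (m - 2), |θ (k + 1) - θ k|)
          ≤ B / Real.sqrt (∑ k ∈ Finset.Icc (r (M - 1) + 1) (m - 1), (p k : ℝ))) ∧
      -- (3) bound on the number of blocks
      (M : ℝ) ≤ max (3 * (n : ℝ) ^ ((1 : ℝ) / 3) * C ^ ((2 : ℝ) / 3)
        * B ^ (-(2 : ℝ) / 3)) 1 :=
  stmt6_general n m hm θ B hB p hp hpn C hC
end

section
/- In the sleeping experts setting with mix-loss, the regret of the Specialist Aggregation Algorithm against any expert j over its awake rounds equals log(u_{1,j}⁻¹) minus log of the final relative weight term, and in particular is bounded by −log u_{1,j}; with uniform prior u_{1,j} = 1/K this gives regret at most log K, and with the expert pool E of size at most n log₂ n (one averaging expert per geometric cover interval contained in [n]) the regret is at most log(n log₂ n). -/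
open Finset

/-!
Along the run the unnormalized weights stay positive and keep total mass one, because an update
only redistributes the mass of the awake set within it. The regret of round `t` against an awake
expert `j` is exactly `log u_{t+1,j} - log u_{t,j}`, and it is zero (as is the weight change) when
`j` sleeps, so the regret telescopes to `log u_{n+1,j} - log u_{1,j} ≤ -log u_{1,j}`.
-/

namespace SpecialistAggregation

variable {ι : Type*} (A : ℕ → Finset ι) (ℓ : ℕ → ι → ℝ) (u : ℕ → ι → ℝ)

structure IsRun : Prop where
  update : ∀ t k, k ∈ A t →
    u (t + 1) k = u t k * Real.exp (-ℓ t k) * (∑ i ∈ A t, u t i)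
      / ∑ i ∈ A t, u t i * Real.exp (-ℓ t i)
  freeze : ∀ t k, k ∉ A t → u (t + 1) k = u t k

variable {A ℓ u}

lemma sum_mul_exp_pos {t : ℕ} (hA : (A t).Nonempty) (hu : ∀ k, 0 < u t k) :
    0 < ∑ i ∈ A t, u t i * Real.exp (-ℓ t i) :=
  sum_pos (fun i _ => mul_pos (hu i) (Real.exp_pos _)) hA

namespace IsRun

lemma pos_succ (h : IsRun A ℓ u) {t : ℕ} (hA : (A t).Nonempty) (hu : ∀ k, 0 < u t k) (k : ι) :
    0 < u (t + 1) k := by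
  by_cases hk : k ∈ A t
  · rw [h.update t k hk]
    have hmass : 0 < ∑ i ∈ A t, u t i := sum_pos (fun i _ => hu i) hA
    exact div_pos (mul_pos (mul_pos (hu k) (Real.exp_pos _)) hmass) (sum_mul_exp_pos hA hu)
  · rw [h.freeze t k hk]
    exact hu k

lemma pos (h : IsRun A ℓ u) (hA : ∀ t, (A t).Nonempty) (hu₁ : ∀ k, 0 < u 1 k) {t : ℕ}
    (ht : 1 ≤ t) (k : ι) : 0 < u t k := by
  induction t, ht using Nat.le_induction generalizing k with
  | base => exact hu₁ k
  | succ t _ ih => exact h.pos_succ (hA t) ih k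

lemma sum_awake_succ (h : IsRun A ℓ u) {t : ℕ}
    (hZ : ∑ i ∈ A t, u t i * Real.exp (-ℓ t i) ≠ 0) :
    ∑ k ∈ A t, u (t + 1) k = ∑ k ∈ A t, u t k := by
  rw [sum_congr rfl (fun k hk => h.update t k hk), ← sum_div, ← sum_mul,
    mul_div_cancel_left₀ _ hZ]

lemma sum_succ [Fintype ι] (h : IsRun A ℓ u) {t : ℕ}
    (hZ : ∑ i ∈ A t, u t i * Real.exp (-ℓ t i) ≠ 0) :
    ∑ k, u (t + 1) k = ∑ k, u t k := by
  classical
  rw [← sum_add_sum_compl (A t), ← sum_add_sum_compl (A t) (u t), h.sum_awake_succ hZ,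
    sum_congr rfl (fun k hk => h.freeze t k (mem_compl.mp hk))]

lemma sum_eq_one [Fintype ι] (h : IsRun A ℓ u) (hA : ∀ t, (A t).Nonempty)
    (hu₁ : ∀ k, 0 < u 1 k) (hsum₁ : ∑ k, u 1 k = 1) {t : ℕ} (ht : 1 ≤ t) :
    ∑ k, u t k = 1 := by
  induction t, ht using Nat.le_induction with
  | base => exact hsum₁
  | succ t ht ih =>
    rw [h.sum_succ (sum_mul_exp_pos (hA t) (h.pos hA hu₁ ht)).ne', ih]

lemma le_one [Fintype ι] (h : IsRun A ℓ u) (hA : ∀ t, (A t).Nonempty)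
    (hu₁ : ∀ k, 0 < u 1 k) (hsum₁ : ∑ k, u 1 k = 1) {t : ℕ} (ht : 1 ≤ t) (j : ι) :
    u t j ≤ 1 :=
  h.sum_eq_one hA hu₁ hsum₁ ht ▸
    single_le_sum (fun k _ => (h.pos hA hu₁ ht k).le) (mem_univ j)

variable {w : ℕ → ι → ℝ}

lemma mixLoss_regret_eq_log_sub [DecidableEq ι] (h : IsRun A ℓ u)
    (hw : ∀ t k, w t k = if k ∈ A t then u t k / ∑ i ∈ A t, u t i else 0)
    {t : ℕ} (hA : (A t).Nonempty) (hu : ∀ k, 0 < u t k) (j : ι) :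
    (if j ∈ A t then -Real.log (∑ k ∈ A t, w t k * Real.exp (-ℓ t k)) - ℓ t j else 0)
      = Real.log (u (t + 1) j) - Real.log (u t j) := by
  by_cases hj : j ∈ A t
  · have hmass : 0 < ∑ i ∈ A t, u t i := sum_pos (fun i _ => hu i) hA
    have hZ := sum_mul_exp_pos (ℓ := ℓ) hA hu
    have hj_exp : 0 < u t j * Real.exp (-ℓ t j) := mul_pos (hu j) (Real.exp_pos _)
    have hmix : ∑ k ∈ A t, w t k * Real.exp (-ℓ t k)
        = (∑ i ∈ A t, u t i * Real.exp (-ℓ t i)) / ∑ i ∈ A t, u t i := by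
      rw [sum_div]
      exact sum_congr rfl fun k hk => by rw [hw t k, if_pos hk, div_mul_eq_mul_div]
    rw [if_pos hj, h.update t j hj, hmix, Real.log_div hZ.ne' hmass.ne',
      Real.log_div (mul_pos hj_exp hmass).ne' hZ.ne', Real.log_mul hj_exp.ne' hmass.ne',
      Real.log_mul (hu j).ne' (Real.exp_ne_zero _), Real.log_exp]
    ring
  · rw [if_neg hj, h.freeze t j hj, sub_self]

lemma sum_mixLoss_regret_eq_log_sub [DecidableEq ι] (h : IsRun A ℓ u)
    (hw : ∀ t k, w t k = if k ∈ A t then u t k / ∑ i ∈ A t, u t i else 0)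
    (hA : ∀ t, (A t).Nonempty) (hu₁ : ∀ k, 0 < u 1 k) (n : ℕ) (j : ι) :
    ∑ t ∈ Icc 1 n,
        (if j ∈ A t then -Real.log (∑ k ∈ A t, w t k * Real.exp (-ℓ t k)) - ℓ t j else 0)
      = Real.log (u (n + 1) j) - Real.log (u 1 j) := by
  rw [sum_congr rfl fun t ht =>
      h.mixLoss_regret_eq_log_sub hw (hA t) (h.pos hA hu₁ (mem_Icc.mp ht).1) j,
    ← Ico_add_one_right_eq_Icc, sum_Ico_sub (fun t => Real.log (u t j)) (by omega)]

end IsRun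

end SpecialistAggregation

open SpecialistAggregation

theorem stmt16_general (K n : ℕ)
    (A : ℕ → Finset (Fin K)) (hA : ∀ t, (A t).Nonempty)
    (ℓ : ℕ → Fin K → ℝ)
    (u w : ℕ → Fin K → ℝ)
    (hu1pos : ∀ k, 0 < u 1 k) (hu1sum : ∑ k, u 1 k = 1)
    (hw : ∀ t k, w t k = if k ∈ A t then u t k / ∑ i ∈ A t, u t i else 0)
    (hupd : ∀ t k, k ∈ A t →
      u (t + 1) k = u t k * Real.exp (-ℓ t k) * (∑ i ∈ A t, u t i)
        / ∑ i ∈ A t, u t i * Real.exp (-ℓ t i))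
    (hfreeze : ∀ t k, k ∉ A t → u (t + 1) k = u t k)
    (j : Fin K) :
    (∑ t ∈ Finset.Icc 1 n,
        (if j ∈ A t then
          -Real.log (∑ k ∈ A t, w t k * Real.exp (-ℓ t k)) - ℓ t j
        else 0)
      = Real.log (1 / u 1 j) - Real.log (1 / u (n + 1) j)) ∧
    (∑ t ∈ Finset.Icc 1 n,
        (if j ∈ A t then
          -Real.log (∑ k ∈ A t, w t k * Real.exp (-ℓ t k)) - ℓ t j
        else 0)
      ≤ -Real.log (u 1 j)) ∧
    ((∀ k, u 1 k = 1 / K) →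
      ∑ t ∈ Finset.Icc 1 n,
        (if j ∈ A t then
          -Real.log (∑ k ∈ A t, w t k * Real.exp (-ℓ t k)) - ℓ t j
        else 0)
      ≤ Real.log K) ∧
    ((∀ k, u 1 k = 1 / K) → (K : ℝ) ≤ n * Real.logb 2 n →
      ∑ t ∈ Finset.Icc 1 n,
        (if j ∈ A t then
          -Real.log (∑ k ∈ A t, w t k * Real.exp (-ℓ t k)) - ℓ t j
        else 0)
      ≤ Real.log ((n : ℝ) * Real.logb 2 n)) := by
  have hrun : IsRun A ℓ u := ⟨hupd, hfreeze⟩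
  rw [hrun.sum_mixLoss_regret_eq_log_sub hw hA hu1pos n j]
  have hlast_pos : 0 < u (n + 1) j := hrun.pos hA hu1pos (by omega) j
  have hlast_le : Real.log (u (n + 1) j) ≤ 0 :=
    Real.log_nonpos hlast_pos.le (hrun.le_one hA hu1pos hu1sum (by omega) j)
  have huniform : (∀ k, u 1 k = 1 / K) → -Real.log (u 1 j) = Real.log K := fun h => by
    rw [h j, one_div, Real.log_inv, neg_neg]
  refine ⟨by rw [one_div, one_div, Real.log_inv, Real.log_inv]; ring, by linarith,
    fun h => by linarith [huniform h], fun h hKn => ?_⟩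
  have hK : (0 : ℝ) < K := by exact_mod_cast j.pos
  linarith [huniform h, Real.log_le_log hK hKn]

/-- Mix-loss regret of the Specialist Aggregation Algorithm against expert `j`
over its awake rounds equals `log (u_{1,j}⁻¹) - log (u_{n+1,j}⁻¹)` (the initial
log-inverse-weight minus the log of the final relative weight term), hence is
at most `-log u_{1,j}`; with the uniform prior `u_{1,j} = 1/K` this is at most
`log K`, and for a pool of size `K ≤ n log₂ n` (one averaging expert per
geometric-cover interval contained in `[n]`) it is at most `log (n log₂ n)`. -/
theorem stmt16 (K n : ℕ) (hK : 0 < K)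
    (A : ℕ → Finset (Fin K)) (hA : ∀ t, (A t).Nonempty)
    (ℓ : ℕ → Fin K → ℝ)
    (u w : ℕ → Fin K → ℝ)
    (hu1pos : ∀ k, 0 < u 1 k) (hu1sum : ∑ k, u 1 k = 1)
    (hw : ∀ t k, w t k = if k ∈ A t then u t k / ∑ i ∈ A t, u t i else 0)
    (hupd : ∀ t k, k ∈ A t →
      u (t + 1) k = u t k * Real.exp (-ℓ t k) * (∑ i ∈ A t, u t i)
        / ∑ i ∈ A t, u t i * Real.exp (-ℓ t i))
    (hfreeze : ∀ t k, k ∉ A t → u (t + 1) k = u t k)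
    (j : Fin K) :
    (∑ t ∈ Finset.Icc 1 n,
        (if j ∈ A t then
          -Real.log (∑ k ∈ A t, w t k * Real.exp (-ℓ t k)) - ℓ t j
        else 0)
      = Real.log (1 / u 1 j) - Real.log (1 / u (n + 1) j)) ∧
    (∑ t ∈ Finset.Icc 1 n,
        (if j ∈ A t then
          -Real.log (∑ k ∈ A t, w t k * Real.exp (-ℓ t k)) - ℓ t j
        else 0)
      ≤ -Real.log (u 1 j)) ∧
    ((∀ k, u 1 k = 1 / K) →
      ∑ t ∈ Finset.Icc 1 n,
        (if j ∈ A t then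
          -Real.log (∑ k ∈ A t, w t k * Real.exp (-ℓ t k)) - ℓ t j
        else 0)
      ≤ Real.log K) ∧
    ((∀ k, u 1 k = 1 / K) → (K : ℝ) ≤ n * Real.logb 2 n →
      ∑ t ∈ Finset.Icc 1 n,
        (if j ∈ A t then
          -Real.log (∑ k ∈ A t, w t k * Real.exp (-ℓ t k)) - ℓ t j
        else 0)
      ≤ Real.log ((n : ℝ) * Real.logb 2 n)) :=
  stmt16_general K n A hA ℓ u w hu1pos hu1sum hw hupd hfreeze j
end
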